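/- Let κ ≤ λ be infinite cardinals with κ regular, and let X be a π-regular topological space with |X| = λ that is not cf(λ)-resolvable. Then there exist a nonempty regular closed subset Y of X and a chain decomposition ⟨Y_α : α < cf(λ)⟩ of Y of length cf(λ) such that |Y_α| < λ for every α < cf(λ) and Y \ Y_α is <κ-closed (in X) for every α < cf(λ). -/

import Mathlib

open Cardinal Set Topology

universe u

/-- A space is `lam`-resolvable if it has `lam` many pairwise disjoint dense subsets. -/
def IsLamResolvable (X : Type u) [TopologicalSpace X] (lam : Cardinal.{u}) : Prop :=
  ∃ 𝒟 : Set (Set X), #𝒟 = lam ∧ (∀ D ∈ 𝒟, Dense D) ∧ 𝒟.PairwiseDisjoint id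

/-- The dispersion character: the minimum cardinality of a nonempty open subset. -/
noncomputable def dispersion (X : Type u) [TopologicalSpace X] : Cardinal.{u} :=
  sInf {c | ∃ U : Set X, IsOpen U ∧ U.Nonempty ∧ c = #U}

/-- The extent: the supremum of the cardinalities of closed discrete subsets. -/
noncomputable def extent (X : Type u) [TopologicalSpace X] : Cardinal.{u} :=
  sSup {c | ∃ D : Set X, IsClosed D ∧ DiscreteTopology D ∧ c = #D}

/-- The derived set: the set of accumulation points of `A`. -/
def derivedPts {X : Type u} [TopologicalSpace X] (A : Set X) : Set X :=
  {x | ∀ U : Set X, IsOpen U → x ∈ U → ∃ y ∈ U ∩ A, y ≠ x}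

/-- The set of complete accumulation points of `A`. -/
def caPts {X : Type u} [TopologicalSpace X] (A : Set X) : Set X :=
  {x | ∀ U : Set X, IsOpen U → x ∈ U → #(↥(U ∩ A)) = #A}

/-- `lam`-compact: every subset of cardinality `lam` has a complete accumulation point. -/
def LamCompactSpace (X : Type u) [TopologicalSpace X] (lam : Cardinal.{u}) : Prop :=
  ∀ A : Set X, #A = lam → (caPts A).Nonempty

/-- A set is regular closed if it equals the closure of its interior. -/
def IsRegClosed {X : Type u} [TopologicalSpace X] (R : Set X) : Prop :=
  R = closure (interior R)

/-- A π-network: every nonempty open set includes a member of the family. -/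
def IsPiNetwork {X : Type u} [TopologicalSpace X] (N : Set (Set X)) : Prop :=
  ∀ U : Set X, IsOpen U → U.Nonempty → ∃ P ∈ N, P ⊆ U

/-- π-regular: the nonempty regular closed sets form a π-network. -/
def PiRegularSpace (X : Type u) [TopologicalSpace X] : Prop :=
  ∀ U : Set X, IsOpen U → U.Nonempty → ∃ R : Set X, R.Nonempty ∧ IsRegClosed R ∧ R ⊆ U

/-- The `<κ`-closure of `Y`: the union of the closures of all subsets of `Y`
of cardinality `< κ`. -/
def smallClosure {X : Type u} [TopologicalSpace X] (κ : Cardinal.{u}) (Y : Set X) : Set X :=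
  ⋃ S ∈ {S : Set X | S ⊆ Y ∧ #S < κ}, closure S

/-- `Y` is `<κ`-closed if it equals its `<κ`-closure. -/
def IsSmallClosed {X : Type u} [TopologicalSpace X] (κ : Cardinal.{u}) (Y : Set X) : Prop :=
  smallClosure κ Y = Y

/-- A chain decomposition of the set `S` of length `β`: an increasing continuous
sequence of sets with union `S` (where `0` also counts as a limit ordinal). -/
def IsChainDecomp {X : Type u} (β : Ordinal.{u}) (f : Ordinal.{u} → Set X) (S : Set X) : Prop :=
  (∀ a b : Ordinal.{u}, a ≤ b → b < β → f a ⊆ f b) ∧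
  (∀ δ : Ordinal.{u}, δ < β → (δ = 0 ∨ Order.IsSuccLimit δ) → f δ = ⋃ a ∈ Set.Iio δ, f a) ∧
  S = ⋃ a ∈ Set.Iio β, f a

/-- `H` is `κ`-approximated in `X`. -/
def IsKApproximated {X : Type u} [TopologicalSpace X] (κ : Cardinal.{u}) (H : Set X) : Prop :=
  ∃ 𝒜 : Set (Set X), #𝒜 = κ ∧ 𝒜.PairwiseDisjoint id ∧
    ∀ A ∈ 𝒜, #A = κ ∧ (∀ Y : Set X, Y ⊆ A → #Y = κ → (caPts Y).Nonempty) ∧ caPts A = H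

/-- `F` is `κ`-nice in `X`. -/
def IsKNice {X : Type u} [TopologicalSpace X] (κ : Cardinal.{u}) (F : Set X) : Prop :=
  ∃ A : Ordinal.{u} → Set X,
    (∀ a ∈ Set.Iio (Order.succ κ).ord, ∀ b ∈ Set.Iio (Order.succ κ).ord,
      a ≠ b → Disjoint (A a) (A b)) ∧
    (∀ a ∈ Set.Iio (Order.succ κ).ord, IsLamResolvable ↥(A a) κ) ∧
    F = ⋂ a ∈ Set.Iio (Order.succ κ).ord,
      closure (⋃ b ∈ Set.Ico a (Order.succ κ).ord, A b)

/-!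
Call `x` heavy if every `<κ`-closed set missing `x` has a complement of size at least `λ`.

If heavy points are dense, list all pairs (heavy point, colour) in a sequence of length `λ` and
choose, for the `t`-th pair, a set of size `<κ` with the point in its closure and disjoint from the
fewer than `λ` points chosen before: this is possible because the `<κ`-closure of the complement
of a set of size `<λ` is `<κ`-closed (here the regularity of `κ` is used). Collecting the sets by
colour yields `λ` disjoint dense sets, so `X` is `λ`-resolvable, hence `cf(λ)`-resolvable.

Otherwise some nonempty open set has no heavy point, and π-regularity gives a nonempty regular
closed `Y` inside it. Every `x ∈ Y` lies in a piece `Y \ C_x` of size `<λ` with `C_x` `<κ`-closed.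
Indexing `Y` by ordinals below `λ.ord` and distributing the pieces along a fundamental sequence of
`λ.ord` gives the chain; `Y` minus a union of pieces is the intersection of `Y` with the `C_x`,
which is `<κ`-closed.
-/

open Function

section SmallClosure

variable {X : Type u} [TopologicalSpace X] {κ : Cardinal.{u}}

lemma mem_smallClosure_iff {Y : Set X} {x : X} :
    x ∈ smallClosure κ Y ↔ ∃ S ⊆ Y, #S < κ ∧ x ∈ closure S := by
  simp only [smallClosure, mem_iUnion, mem_ofPred_eq, exists_prop, and_assoc]

lemma smallClosure_mono {Y Z : Set X} (h : Y ⊆ Z) : smallClosure κ Y ⊆ smallClosure κ Z :=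
  fun _ hx ↦
    let ⟨S, hS, hSκ, hxS⟩ := mem_smallClosure_iff.1 hx
    mem_smallClosure_iff.2 ⟨S, hS.trans h, hSκ, hxS⟩

lemma subset_smallClosure (hκ : 1 < κ) (Y : Set X) : Y ⊆ smallClosure κ Y := fun y hy ↦
  mem_smallClosure_iff.2
    ⟨{y}, singleton_subset_iff.2 hy, by rwa [mk_singleton], subset_closure rfl⟩

lemma isSmallClosed_iff (hκ : 1 < κ) {Y : Set X} :
    IsSmallClosed κ Y ↔ smallClosure κ Y ⊆ Y :=
  ⟨fun h ↦ h.subset, fun h ↦ h.antisymm (subset_smallClosure hκ Y)⟩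

lemma IsClosed.isSmallClosed {Y : Set X} (hY : IsClosed Y) (hκ : 1 < κ) :
    IsSmallClosed κ Y :=
  (isSmallClosed_iff hκ).2 fun _ hx ↦
    let ⟨_, hS, _, hxS⟩ := mem_smallClosure_iff.1 hx
    closure_minimal hS hY hxS

lemma isSmallClosed_of_forall_notMem (hκ : 1 < κ) {Y : Set X}
    (h : ∀ x ∉ Y, ∃ C, IsSmallClosed κ C ∧ Y ⊆ C ∧ x ∉ C) : IsSmallClosed κ Y := by
  refine (isSmallClosed_iff hκ).2 fun x hx ↦ ?_
  by_contra hxY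
  obtain ⟨C, hC, hYC, hxC⟩ := h x hxY
  exact hxC (hC ▸ smallClosure_mono hYC hx)

lemma isSmallClosed_smallClosure (hκ : κ.IsRegular) (Y : Set X) :
    IsSmallClosed κ (smallClosure κ Y) := by
  refine (isSmallClosed_iff (one_lt_aleph0.trans_le hκ.aleph0_le)).2 fun x hx ↦ ?_
  obtain ⟨T, hT, hTκ, hxT⟩ := mem_smallClosure_iff.1 hx
  choose W hWY hWκ htW using fun t : T ↦ mem_smallClosure_iff.1 (hT t.2)
  refine mem_smallClosure_iff.2 ⟨⋃ t, W t, iUnion_subset hWY,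
    mk_iUnion_le_sum_mk.trans_lt (sum_lt_of_isRegular hκ hTκ hWκ), ?_⟩
  refine closure_minimal (fun t ht ↦ ?_) isClosed_closure hxT
  exact closure_mono (subset_iUnion W ⟨t, ht⟩) (htW ⟨t, ht⟩)

end SmallClosure

lemma IsLamResolvable.mono {X : Type u} [TopologicalSpace X] {μ ν : Cardinal.{u}}
    (h : IsLamResolvable X ν) (hμν : μ ≤ ν) : IsLamResolvable X μ := by
  obtain ⟨𝒟, rfl, hdense, hdisj⟩ := h
  obtain ⟨𝒟', hsub, rfl⟩ := le_mk_iff_exists_subset.1 hμν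
  exact ⟨𝒟', rfl, fun D hD ↦ hdense D (hsub hD), hdisj.subset hsub⟩

lemma isLamResolvable_of_pairwise_disjoint {X : Type u} [TopologicalSpace X] [Nonempty X]
    {I : Type u} (D : I → Set X) (hdense : ∀ i, Dense (D i))
    (hdisj : Pairwise (Disjoint on D)) : IsLamResolvable X #I := by
  have hinj : Injective D := fun i j hij ↦ by
    by_contra hne
    obtain ⟨x, hx⟩ := (hdense i).nonempty
    exact (hdisj hne).ne_of_mem hx (hij ▸ hx) rfl
  refine ⟨range D, mk_range_eq D hinj, forall_mem_range.2 hdense, ?_⟩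
  rintro _ ⟨i, rfl⟩ _ ⟨j, rfl⟩ hne
  exact hdisj fun h ↦ hne (congrArg D h)

lemma mk_iUnion_lt_of_isRegular {α ι : Type u} {κ lam : Cardinal.{u}} (hκ : κ.IsRegular)
    (hκlam : κ ≤ lam) {s : ι → Set α} (hι : #ι < lam) (hs : ∀ i, #(s i) < κ) :
    #(⋃ i, s i) < lam := by
  rcases hκlam.lt_or_eq with hlt | rfl
  · calc #(⋃ i, s i) ≤ #ι * ⨆ i, #(s i) := mk_iUnion_le s
      _ < lam := mul_lt_of_lt (hκ.aleph0_le.trans hlt.le) hι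
          ((ciSup_le' fun i ↦ (hs i).le).trans_lt hlt)
  · exact mk_iUnion_le_sum_mk.trans_lt (sum_lt_of_isRegular hκ hι hs)

lemma exists_pairwise_disjoint_of_forall_avoid {X T : Type u} [LinearOrder T] [WellFoundedLT T]
    {κ lam : Cardinal.{u}} (hκ : κ.IsRegular) (hκlam : κ ≤ lam) (hT : ∀ t : T, #(Iio t) < lam)
    (P : T → Set X → Prop)
    (hP : ∀ t (A : Set X), #A < lam → ∃ S : Set X, #S < κ ∧ Disjoint S A ∧ P t S) :
    ∃ S : T → Set X, Pairwise (Disjoint on S) ∧ ∀ t, P t (S t) := by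
  have step : ∀ t (F : Iio t → {S : Set X // #S < κ}),
      ∃ S : {S : Set X // #S < κ}, Disjoint S.1 (⋃ s, (F s).1) ∧ P t S := fun t F ↦
    let ⟨S, hSκ, hSA, hPS⟩ :=
      hP t _ (mk_iUnion_lt_of_isRegular hκ hκlam (hT t) fun s ↦ (F s).2)
    ⟨⟨S, hSκ⟩, hSA, hPS⟩
  choose next hnext using step
  -- Recursing through sets of size `<κ` keeps the union of the earlier choices below `λ`.
  let S : T → {S : Set X // #S < κ} := wellFounded_lt.fix fun t F ↦ next t fun s ↦ F s.1 s.2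
  have hS : ∀ t, S t = next t fun s ↦ S s.1 := wellFounded_lt.fix_eq _
  refine ⟨fun t ↦ (S t).1, (pairwise_disjoint_on _).2 fun s t hst ↦ ?_, fun t ↦ ?_⟩
  · rw [hS t]
    exact ((hnext t _).1.mono_right (subset_iUnion (fun r : Iio t ↦ (S r.1).1) ⟨s, hst⟩)).symm
  · change P t (S t).1
    rw [hS t]
    exact (hnext t _).2

section Heavy

variable {X : Type u} [TopologicalSpace X] {κ lam : Cardinal.{u}}

def IsHeavy (κ lam : Cardinal.{u}) (x : X) : Prop :=
  ∀ C : Set X, IsSmallClosed κ C → x ∉ C → lam ≤ #(Cᶜ : Set X)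

lemma IsHeavy.exists_mem_closure_disjoint {x : X} (hx : IsHeavy κ lam x) (hκ : κ.IsRegular)
    (hlam : ℵ₀ ≤ lam) {A : Set X} (hA : #A < lam) :
    ∃ S : Set X, #S < κ ∧ Disjoint S A ∧ x ∈ closure S := by
  have hxA : #(insert x A : Set X) < lam :=
    mk_insert_le.trans_lt (add_lt_of_lt hlam hA (one_lt_aleph0.trans_le hlam))
  have hmem : x ∈ smallClosure κ (insert x A)ᶜ := by
    by_contra hx'
    refine (hx _ (isSmallClosed_smallClosure hκ _) hx').not_gt (lt_of_le_of_lt ?_ hxA)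
    exact mk_le_mk_of_subset (compl_subset_comm.1
      (subset_smallClosure (one_lt_aleph0.trans_le hκ.aleph0_le) _))
  obtain ⟨S, hS, hSκ, hxS⟩ := mem_smallClosure_iff.1 hmem
  exact ⟨S, hSκ, disjoint_of_subset_left hS (disjoint_compl_left.mono_right (subset_insert x A)),
    hxS⟩

lemma isLamResolvable_of_dense_heavy [Nonempty X] (hκ : κ.IsRegular) (hκlam : κ ≤ lam)
    (hX : #X ≤ lam) (hd : ∀ U : Set X, IsOpen U → U.Nonempty → ∃ x ∈ U, IsHeavy κ lam x) :
    IsLamResolvable X lam := by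
  have hlam := hκ.aleph0_le.trans hκlam
  let T := lam.ord.ToType
  let H := {x : X // IsHeavy κ lam x}
  have hT : #T = lam := mk_ord_toType lam
  obtain ⟨x₀, -, hx₀⟩ := hd univ isOpen_univ univ_nonempty
  have : Nonempty T := mk_ne_zero_iff.1 (hT ▸ (aleph0_pos.trans_le hlam).ne')
  have : Nonempty (H × T) := ⟨(⟨x₀, hx₀⟩, Classical.arbitrary T)⟩
  have hHT : #(H × T) ≤ #T := by
    rw [mk_prod, lift_id, lift_id, hT]
    exact (mul_le_mul' ((mk_subtype_le _).trans hX) le_rfl).trans (mul_eq_self hlam).le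
  obtain ⟨j⟩ := hHT
  let e : T → H × T := invFun j
  have he : Surjective e := invFun_surjective j.injective
  obtain ⟨S, hdisj, hS⟩ := exists_pairwise_disjoint_of_forall_avoid hκ hκlam
    (fun t ↦ by simpa [T] using mk_Iio_lt t (by simp [T]))
    (fun t S ↦ (e t).1.1 ∈ closure S)
    (fun t _ hA ↦ (e t).1.2.exists_mem_closure_disjoint hκ hlam hA)
  let D : T → Set X := fun i ↦ ⋃ t ∈ {t | (e t).2 = i}, S t
  rw [← hT]
  refine isLamResolvable_of_pairwise_disjoint D (fun i ↦ ?_) fun i i' hii' ↦ ?_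
  · refine dense_iff_inter_open.2 fun U hU hUne ↦ ?_
    obtain ⟨x, hxU, hx⟩ := hd U hU hUne
    obtain ⟨t, ht⟩ := he (⟨x, hx⟩, i)
    have hxS : x ∈ closure (S t) := by simpa [ht] using hS t
    obtain ⟨y, hyU, hyS⟩ := mem_closure_iff.1 hxS U hU hxU
    exact ⟨y, hyU, mem_biUnion (by simp [ht]) hyS⟩
  · refine disjoint_iUnion₂_left.2 fun t ht ↦ disjoint_iUnion₂_right.2 fun t' ht' ↦ hdisj ?_
    rintro rfl
    exact hii' (ht.symm.trans ht')

end Heavy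

lemma isChainDecomp_stages {X : Type u} {ι : Type*} {β : Ordinal.{u}} (hβ : Order.IsSuccLimit β)
    (σ : ι → Ordinal.{u}) (hσ : ∀ i, σ i < β) (V : ι → Set X) :
    IsChainDecomp β (fun a ↦ ⋃ i ∈ {i | σ i < a}, V i) (⋃ i, V i) := by
  have hcover : ∀ c, Order.IsSuccLimit c → ∀ i, σ i < c →
      V i ⊆ ⋃ a ∈ Iio c, ⋃ j ∈ {j | σ j < a}, V j := fun c hc i hi ↦
    (subset_biUnion_of_mem (u := V) (Order.lt_succ (σ i))).trans
      (subset_biUnion_of_mem (u := fun a ↦ ⋃ j ∈ {j | σ j < a}, V j) (hc.succ_lt hi))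
  refine ⟨fun a b hab _ ↦ biUnion_subset_biUnion_left fun i hi ↦ lt_of_lt_of_le hi hab,
    fun δ _ hδ ↦ ?_, ?_⟩
  · refine (iUnion₂_subset fun i hi ↦ ?_).antisymm
      (iUnion₂_subset fun a ha ↦
        biUnion_subset_biUnion_left fun i hi ↦ show σ i < δ from lt_trans hi ha)
    rcases hδ with rfl | hδ
    · exact absurd (show σ i < 0 from hi) not_lt_zero
    · exact hcover δ hδ i hi
  · exact (iUnion_subset fun i ↦ hcover β hβ i (hσ i)).antisymm
      (iUnion₂_subset fun a _ ↦ iUnion₂_subset fun i _ ↦ subset_iUnion V i)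

lemma exists_injective_lt_ord {ι : Type u} {c : Cardinal.{u}} (h : #ι ≤ c) :
    ∃ r : ι → Ordinal.{u}, Injective r ∧ ∀ i, r i < c.ord := by
  have : lift.{u + 1} #ι ≤ lift.{u} #(Iio c.ord) := by simpa [mk_Iio_ordinal] using h
  obtain ⟨j⟩ := lift_mk_le'.1 this
  exact ⟨fun i ↦ (j i).1, fun a b hab ↦ j.injective (Subtype.ext hab), fun i ↦ (j i).2⟩

lemma mk_setOf_lt_le_card {ι : Type u} {r : ι → Ordinal.{u}} (hr : Injective r) (γ : Ordinal.{u}) :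
    #{i | r i < γ} ≤ γ.card := by
  have := lift_mk_le_lift_mk_of_injective (f := fun i : {i | r i < γ} ↦ (⟨r i, i.2⟩ : Iio γ))
    fun a b h ↦ Subtype.ext (hr (congrArg Subtype.val h))
  rwa [mk_Iio_ordinal, lift_lift, lift_le] at this

lemma exists_stages {X ι : Type u} {lam : Cardinal.{u}} (hlam : ℵ₀ ≤ lam) (hι : #ι ≤ lam)
    (V : ι → Set X) (hV : ∀ i, #(V i) < lam) :
    ∃ σ : ι → Ordinal.{u}, (∀ i, σ i < lam.ord.cof.ord) ∧
      ∀ a < lam.ord.cof.ord, #(⋃ i ∈ {i | σ i < a}, V i) < lam := by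
  obtain ⟨r, hr, hrlam⟩ := exists_injective_lt_ord hι
  obtain ⟨g, hg⟩ := Ordinal.exists_isFundamentalSeq (o := lam.ord) rfl
  have hreach : ∀ i, ∃ b, max (r i) (#(V i)).ord < (g b).1 := fun i ↦ by
    obtain ⟨_, ⟨b, rfl⟩, hb⟩ := hg.isCofinal_range ⟨Order.succ (max (r i) (#(V i)).ord),
      (isSuccLimit_ord hlam).succ_lt (max_lt (hrlam i) (ord_lt_ord.2 (hV i)))⟩
    exact ⟨b, Order.succ_le_iff.1 hb⟩
  -- `r` bounds the number of indices entering before stage `a`, `#(V i)` their sizes.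
  choose s hs using hreach
  refine ⟨fun i ↦ (s i).1, fun i ↦ (s i).2, fun a ha ↦ ?_⟩
  set γ := (g ⟨a, ha⟩).1
  have hγ : γ.card < lam := lt_ord.1 (g ⟨a, ha⟩).2
  have hbelow : ∀ i, (s i).1 < a → max (r i) (#(V i)).ord < γ := fun i hi ↦
    (hs i).trans_le (hg.strictMono.monotone (show s i ≤ ⟨a, ha⟩ from hi.le))
  calc #(⋃ i ∈ {i | (s i).1 < a}, V i)
      ≤ #{i | (s i).1 < a} * ⨆ i : {i | (s i).1 < a}, #(V i) := mk_biUnion_le V _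
    _ ≤ γ.card * γ.card := by
        refine mul_le_mul' ?_ (ciSup_le' fun i ↦ ?_)
        · exact (mk_le_mk_of_subset fun i hi ↦ (le_max_left _ _).trans_lt (hbelow i hi)).trans
            (mk_setOf_lt_le_card hr γ)
        · exact ord_le.1 ((le_max_right _ _).trans_lt (hbelow i i.2)).le
    _ < lam := mul_lt_of_lt hlam hγ hγ

lemma exists_chainDecomp_of_forall_not_isHeavy {X : Type u} [TopologicalSpace X]
    {κ lam : Cardinal.{u}} (hκ : 1 < κ) (hlam : ℵ₀ ≤ lam) {R : Set X} (hR : IsClosed R)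
    (hRlam : #R ≤ lam) (hlight : ∀ x ∈ R, ¬ IsHeavy κ lam x) :
    ∃ f : Ordinal.{u} → Set X, IsChainDecomp lam.ord.cof.ord f R ∧
      (∀ a ∈ Iio lam.ord.cof.ord, #(f a) < lam) ∧
      (∀ a ∈ Iio lam.ord.cof.ord, IsSmallClosed κ (R \ f a)) := by
  have hC : ∀ x : R, ∃ C : Set X, IsSmallClosed κ C ∧ (x : X) ∉ C ∧ #(Cᶜ : Set X) < lam :=
    fun x ↦ by simpa [IsHeavy] using hlight x x.2
  choose C hCκ hxC hClam using hC
  let V : R → Set X := fun x ↦ R \ C x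
  have hRV : R = ⋃ x, V x := (iUnion_subset fun x ↦ sdiff_subset).antisymm'
    fun x hx ↦ mem_iUnion.2 ⟨⟨x, hx⟩, hx, hxC _⟩
  obtain ⟨σ, hσ, hσlam⟩ := exists_stages hlam hRlam V
    fun x ↦ (mk_le_mk_of_subset fun _ hy ↦ hy.2).trans_lt (hClam x)
  have hcof : Order.IsSuccLimit lam.ord.cof.ord := isSuccLimit_ord
    (Ordinal.aleph0_le_cof_iff.2 (Ordinal.one_lt_cof_iff.2 (isSuccLimit_ord hlam)))
  obtain ⟨hmono, hcont, hunion⟩ := isChainDecomp_stages hcof σ hσ V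
  refine ⟨_, ⟨hmono, hcont, hRV.trans hunion⟩, hσlam,
    fun a _ ↦ isSmallClosed_of_forall_notMem hκ fun y hy ↦ ?_⟩
  by_cases hyR : y ∈ R
  · obtain ⟨x, hx, hyx⟩ := mem_iUnion₂.1 (not_not.1 fun h ↦ hy ⟨hyR, h⟩)
    exact ⟨C x, hCκ x, fun z hz ↦ by_contra fun hzC ↦ hz.2 (mem_biUnion hx ⟨hz.1, hzC⟩), hyx.2⟩
  · exact ⟨R, hR.isSmallClosed hκ, sdiff_subset, hyR⟩

/-- If `κ ≤ λ` are infinite cardinals with `κ` regular and `X` is a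
π-regular space with `|X| = λ` that is not `cf(λ)`-resolvable, then there are a nonempty
regular closed `Y ⊆ X` and a chain decomposition `⟨Y_α : α < cf(λ)⟩` of `Y` with
`|Y_α| < λ` and `Y \\ Y_α` `<κ`-closed for all `α < cf(λ)`. -/
theorem stmt14 {X : Type u} [TopologicalSpace X] (κ lam : Cardinal.{u})
    (hκ : κ.IsRegular) (hlam : ℵ₀ ≤ lam) (hkl : κ ≤ lam) (hX : #X = lam)
    (hpireg : PiRegularSpace X) (hnres : ¬ IsLamResolvable X lam.ord.cof) :
    ∃ Y : Set X, Y.Nonempty ∧ IsRegClosed Y ∧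
      ∃ f : Ordinal.{u} → Set X,
        IsChainDecomp lam.ord.cof.ord f Y ∧
        (∀ a ∈ Set.Iio lam.ord.cof.ord, #(f a) < lam) ∧
        (∀ a ∈ Set.Iio lam.ord.cof.ord, IsSmallClosed κ (Y \ f a)) := by
  by_cases hd : ∀ U : Set X, IsOpen U → U.Nonempty → ∃ x ∈ U, IsHeavy κ lam x
  · have : Nonempty X := mk_ne_zero_iff.1 (hX ▸ (aleph0_pos.trans_le hlam).ne')
    exact absurd ((isLamResolvable_of_dense_heavy hκ hkl hX.le hd).mono (Ordinal.cof_ord_le lam))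
      hnres
  push Not at hd
  obtain ⟨U, hU, hUne, hlight⟩ := hd
  obtain ⟨Y, hYne, hYreg, hYU⟩ := hpireg U hU hUne
  have hYcl : IsClosed Y := hYreg ▸ isClosed_closure
  exact ⟨Y, hYne, hYreg, exists_chainDecomp_of_forall_not_isHeavy
    (one_lt_aleph0.trans_le hκ.aleph0_le) hlam hYcl ((mk_set_le Y).trans hX.le)
    fun x hx ↦ hlight x (hYU hx)⟩
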